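/- Let F be a field, P a finite-dimensional F-vector space, and V, W subspaces of P such that V ∩ W = 0 and V + W ≠ P. Let C be a subspace of P with V ⊆ C, C ∩ W = 0 and C + W = P (a complement to W in P containing V). Then the assignment (A, B) ↦ (A, B ∩ C) defines an order isomorphism from the poset of pairs (A, B) of nonzero proper subspaces of P with A ∩ B = 0, A + B = P, A ⊆ V and W ⊆ B, onto the poset of pairs (A', B') of nonzero proper subspaces of C with A' ∩ B' = 0, A' + B' = C and A' ⊆ V; its inverse is (A', B') ↦ (A', B' + W). -/
import Mathlib

open Matrix
open scoped MatrixGroups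

section helpers
variable {F : Type} [Field F] {P : Type} [AddCommGroup P] [Module F P]

private lemma cdl_key1 {W C : Submodule F P} (hCWtop : C ⊔ W = ⊤)
    (B : Submodule F P) (hB : W ≤ B) : (B ⊓ C) ⊔ W = B := by
  rw [inf_sup_assoc_of_le C hB, hCWtop, inf_top_eq]

private lemma cdl_key2 {W C : Submodule F P} (hCW : C ⊓ W = ⊥)
    (B : Submodule F P) (hB : B ≤ C) : (B ⊔ W) ⊓ C = B := by
  rw [sup_inf_assoc_of_le W hB, inf_comm W C, hCW, sup_bot_eq]

private lemma cdl_fwd {V W C : Submodule F P}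
    (hVWne : V ⊔ W ≠ ⊤) (hVC : V ≤ C) (hCWtop : C ⊔ W = ⊤)
    {A B : Submodule F P} (hA0 : A ≠ ⊥) (hBt : B ≠ ⊤)
    (hAB : A ⊓ B = ⊥) (hABt : A ⊔ B = ⊤) (hAV : A ≤ V) (hWB : W ≤ B) :
    A ≠ ⊥ ∧ B ⊓ C ≠ ⊥ ∧ A ≠ C ∧ B ⊓ C ≠ C ∧ A ≤ C ∧ B ⊓ C ≤ C ∧
      A ⊓ (B ⊓ C) = ⊥ ∧ A ⊔ (B ⊓ C) = C ∧ A ≤ V := by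
  have hAC : A ≤ C := hAV.trans hVC
  have hsplit : A ⊔ (B ⊓ C) = C := by
    rw [← sup_inf_assoc_of_le B hAC, hABt, top_inf_eq]
  have hCneV : C ≠ V := fun h => hVWne (h ▸ hCWtop)
  refine ⟨hA0, ?_, ?_, ?_, hAC, inf_le_right, ?_, hsplit, hAV⟩
  · intro h
    rw [h, sup_bot_eq] at hsplit
    exact hCneV (le_antisymm (hsplit ▸ hAV) hVC)
  · intro h
    exact hCneV (le_antisymm (h ▸ hAV) hVC)
  · intro h
    exact hBt (top_unique (hCWtop ▸ sup_le (h ▸ (inf_le_left : B ⊓ C ≤ B)) hWB))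
  · exact le_bot_iff.1 ((inf_le_inf_left A (inf_le_left : B ⊓ C ≤ B)).trans hAB.le)

private lemma cdl_bwd {V W C : Submodule F P}
    (_hVW : V ⊓ W = ⊥) (hVWne : V ⊔ W ≠ ⊤) (hVC : V ≤ C) (hCW : C ⊓ W = ⊥)
    (hCWtop : C ⊔ W = ⊤)
    {A B : Submodule F P} (hA0 : A ≠ ⊥) (hB0 : B ≠ ⊥) (hBC' : B ≠ C)
    (hBC : B ≤ C) (hAB : A ⊓ B = ⊥) (hABC : A ⊔ B = C) (hAV : A ≤ V) :
    A ≠ ⊥ ∧ B ⊔ W ≠ ⊥ ∧ A ≠ ⊤ ∧ B ⊔ W ≠ ⊤ ∧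
      A ⊓ (B ⊔ W) = ⊥ ∧ A ⊔ (B ⊔ W) = ⊤ ∧ A ≤ V ∧ W ≤ B ⊔ W := by
  refine ⟨hA0, fun h => hB0 (le_bot_iff.1 (h ▸ le_sup_left)), ?_, ?_, ?_, ?_, hAV, le_sup_right⟩
  · intro h
    exact hVWne (top_unique (h ▸ hAV.trans le_sup_left : (⊤ : Submodule F P) ≤ V ⊔ W))
  · intro h
    apply hBC'
    rw [← cdl_key2 hCW B hBC, h, top_inf_eq]
  · calc A ⊓ (B ⊔ W) = (A ⊓ (B ⊔ W)) ⊓ C :=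
          (inf_of_le_left (inf_le_left.trans (hAV.trans hVC))).symm
      _ = A ⊓ ((B ⊔ W) ⊓ C) := by rw [inf_assoc]
      _ = A ⊓ B := by rw [cdl_key2 hCW B hBC]
      _ = ⊥ := hAB
  · rw [← sup_assoc, hABC, hCWtop]

end helpers

/-- **Charney's "cutting down" lemma.** Let `V, W ≤ P` with `V ⊓ W = ⊥` and `V ⊔ W ≠ ⊤`,
and let `C` be a complement to `W` containing `V`. Then `(A, B) ↦ (A, B ⊓ C)` is an order
isomorphism from the poset of splittings `(A, B)` of `P` with `A ≤ V` and `W ≤ B` onto the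
poset of splittings `(A, B)` of `C` with `A ≤ V`, with inverse `(A, B) ↦ (A, B ⊔ W)`.
(Splittings are ordered by `(A, B) ≤ (A', B')` iff `A' ≤ A` and `B ≤ B'`; the first
coordinate carries the dual order.) -/
theorem cutting_down_lemma (F : Type) [Field F] (P : Type) [AddCommGroup P] [Module F P]
    [FiniteDimensional F P] (V W C : Submodule F P)
    (hVW : V ⊓ W = ⊥) (hVWne : V ⊔ W ≠ ⊤)
    (hVC : V ≤ C) (hCW : C ⊓ W = ⊥) (hCWtop : C ⊔ W = ⊤) :
    ∃ e :
      {x : (Submodule F P)ᵒᵈ × Submodule F P //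
        OrderDual.ofDual x.1 ≠ ⊥ ∧ x.2 ≠ ⊥ ∧
        OrderDual.ofDual x.1 ≠ ⊤ ∧ x.2 ≠ ⊤ ∧
        OrderDual.ofDual x.1 ⊓ x.2 = ⊥ ∧ OrderDual.ofDual x.1 ⊔ x.2 = ⊤ ∧
        OrderDual.ofDual x.1 ≤ V ∧ W ≤ x.2} ≃o
      {y : (Submodule F P)ᵒᵈ × Submodule F P //
        OrderDual.ofDual y.1 ≠ ⊥ ∧ y.2 ≠ ⊥ ∧
        OrderDual.ofDual y.1 ≠ C ∧ y.2 ≠ C ∧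
        OrderDual.ofDual y.1 ≤ C ∧ y.2 ≤ C ∧
        OrderDual.ofDual y.1 ⊓ y.2 = ⊥ ∧ OrderDual.ofDual y.1 ⊔ y.2 = C ∧
        OrderDual.ofDual y.1 ≤ V},
      (∀ x, (e x).val.1 = x.val.1 ∧ (e x).val.2 = x.val.2 ⊓ C) ∧
      (∀ y, (e.symm y).val.1 = y.val.1 ∧ (e.symm y).val.2 = y.val.2 ⊔ W) := by
  refine ⟨{ toFun := fun x => ⟨(x.val.1, x.val.2 ⊓ C),
              cdl_fwd hVWne hVC hCWtop x.prop.1 x.prop.2.2.2.1 x.prop.2.2.2.2.1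
                x.prop.2.2.2.2.2.1 x.prop.2.2.2.2.2.2.1 x.prop.2.2.2.2.2.2.2⟩
            invFun := fun y => ⟨(y.val.1, y.val.2 ⊔ W),
              cdl_bwd hVW hVWne hVC hCW hCWtop y.prop.1 y.prop.2.1 y.prop.2.2.2.1
                y.prop.2.2.2.2.2.1 y.prop.2.2.2.2.2.2.1 y.prop.2.2.2.2.2.2.2.1
                y.prop.2.2.2.2.2.2.2.2⟩
            left_inv := fun x =>
              Subtype.ext (Prod.ext rfl (cdl_key1 hCWtop x.val.2 x.prop.2.2.2.2.2.2.2))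
            right_inv := fun y =>
              Subtype.ext (Prod.ext rfl (cdl_key2 hCW y.val.2 y.prop.2.2.2.2.2.1))
            map_rel_iff' := ?_ }, fun x => ⟨rfl, rfl⟩, fun y => ⟨rfl, rfl⟩⟩
  intro x y
  constructor
  · rintro ⟨h1, h2⟩
    refine ⟨h1, ?_⟩
    have h2' : x.val.2 ⊓ C ≤ y.val.2 ⊓ C := h2
    have h3 := sup_le_sup_right h2' W
    rwa [cdl_key1 hCWtop x.val.2 x.prop.2.2.2.2.2.2.2,
      cdl_key1 hCWtop y.val.2 y.prop.2.2.2.2.2.2.2] at h3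
  · rintro ⟨h1, h2⟩
    exact ⟨h1, inf_le_inf_right C h2⟩
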